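/- Type II, Red winning when Blue touches β: on a type II board with long b-pile β, if m_b ≥ 0 and m_b + |β|_b ≤ n_r when Blue's turn starts, and Blue places a chip (blue or red) on β during their current round, then Red wins by applying strategy S at every round. -/

import Mathlib

/-!  A model of the two-player, two-color endgame of *So Long Sucker*.

The two remaining players are Blue and Red, identified with their colors.
A pile is a finite sequence of chips (head = top chip).  A game state
records the board, the number of chips of each color held by each player,
and the active player. -/

/-- The two chip colors (also naming the two remaining players). -/
inductive Color : Type
  | b : Color
  | r : Color
deriving DecidableEq, Repr

/-- The opponent's color. -/
def Color.other : Color → Color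
  | Color.b => Color.r
  | Color.r => Color.b

/-- A pile of chips; the head of the list is the top chip. -/
abbrev Pile := List Color

/-- A game state: the board (a list of piles), the chip counts
`chips p c` = number of `c`-colored chips held by player `p`,
and the active player. -/
structure GState where
  board : List Pile
  chips : Color → Color → ℕ
  active : Color

/-- Total number of chips in player `p`'s possession. -/
def totalChips (s : GState) (p : Color) : ℕ :=
  s.chips p Color.b + s.chips p Color.r

/-- The Next Player Rule in the two-player, two-color endgame, as a function
of the pile played on (before the placement) and the color of the placed
chip: if the placement triggers a capture, the capturing player moves next;
otherwise the player of the other color than the placed chip moves next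
(this is the unique player allowed by the Next Player Rule). -/
def nextActive (π : Pile) (c : Color) : Color :=
  if π.head? = some c then c else c.other

/-- Placement of a chip of color `c` on pile number `i` by the active
player, with the Capture Rule and Next Player Rule applied. -/
inductive PlaceOn (i : ℕ) : GState → GState → Prop
  | noCapture (s : GState) (c : Color)
      (hi : i < s.board.length)
      (hc : 0 < s.chips s.active c)
      (hcap : (s.board.getD i []).head? ≠ some c) :
      PlaceOn i s
        { board := s.board.set i (c :: s.board.getD i []),
          chips := fun p x =>
            s.chips p x - (if p = s.active ∧ x = c then 1 else 0),
          active := c.other }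
  | capture (s : GState) (c : Color) (d : Color)
      (hi : i < s.board.length)
      (hc : 0 < s.chips s.active c)
      (hcap : (s.board.getD i []).head? = some c)
      (hd : d ∈ c :: s.board.getD i []) :
      PlaceOn i s
        { board := s.board.set i [],
          chips := fun p x =>
            (s.chips p x - (if p = s.active ∧ x = c then 1 else 0))
              + (if p = c then
                  (c :: s.board.getD i []).count x - (if d = x then 1 else 0)
                 else 0),
          active := c }

/-- One legal move of the active player: placing a chip on some pile
(resolving captures), discarding a prisoner, or donating a prisoner
to the opponent. -/
inductive Step : GState → GState → Prop
  | place (i : ℕ) (s s' : GState) (h : PlaceOn i s s') : Step s s'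
  | discardPrisoner (s : GState)
      (hc : 0 < s.chips s.active s.active.other) :
      Step s
        { board := s.board,
          chips := fun p x =>
            s.chips p x - (if p = s.active ∧ x = s.active.other then 1 else 0),
          active := s.active }
  | donatePrisoner (s : GState)
      (hc : 0 < s.chips s.active s.active.other) :
      Step s
        { board := s.board,
          chips := fun p x =>
            if x = s.active.other then
              (if p = s.active then s.chips p x - 1 else s.chips p x + 1)
            else s.chips p x,
          active := s.active }

/-- Player `p` has a winning strategy from state `s`: either the opponent is
to move with no chips (and `p` refuses to donate), so the opponent is
eliminated and `p` wins; or it is `p`'s turn and some move of `p` leads to a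
winning position; or it is the opponent's turn and every move of the opponent
leads to a position winning for `p`. -/
inductive WinsFor (p : Color) : GState → Prop
  | elim (s : GState) (h : s.active ≠ p) (h0 : totalChips s s.active = 0) :
      WinsFor p s
  | mine (s s' : GState) (h : s.active = p) (hs : Step s s')
      (hw : WinsFor p s') : WinsFor p s
  | theirs (s : GState) (h : s.active ≠ p) (h0 : 0 < totalChips s s.active)
      (hw : ∀ s', Step s s' → WinsFor p s') : WinsFor p s

/-- The index of the pile on which strategy `S` places its guard:
the longest pile whose top chip has the opponent's color `q`,
or an empty pile if there is no `q`-pile. -/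
def targetIdx (q : Color) (l : List Pile) : ℕ :=
  let opp := l.filter (fun π => π.head? == some q)
  if opp.isEmpty then
    l.findIdx (fun π => π.isEmpty)
  else
    l.findIdx (fun π =>
      (π.head? == some q) &&
        (π.length == (opp.map List.length).foldr Nat.max 0))

/-- The state resulting from the active player `p` playing one full round of
strategy `S`: capture every `p`-pile (discarding an opponent chip from a
captured pile when it contains one, and a `p` chip otherwise), discard all
prisoners, and finally place one guard on the longest opponent-colored pile,
or on an empty pile if there is none.  The turn then passes to the
opponent. -/
def SRound (s : GState) : GState :=
  let p := s.active
  let q := p.other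
  let capt := s.board.filter (fun π => π.head? == some p)
  let b1 := s.board.map (fun π => if π.head? == some p then ([] : Pile) else π)
  let g1 := s.chips p p +
      (capt.map (fun π =>
        if π.contains q then π.count p else π.count p - 1)).sum
  let i := targetIdx q b1
  { board := b1.set i (p :: b1.getD i []),
    chips := fun pl x =>
      if pl = p then (if x = p then g1 - 1 else 0) else s.chips pl x,
    active := q }

/-- Player `p` wins by applying strategy `S` at each of `p`'s rounds,
whatever the opponent plays. -/
inductive WinsWithS (p : Color) : GState → Prop
  | elim (s : GState) (h : s.active ≠ p) (h0 : totalChips s s.active = 0) :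
      WinsWithS p s
  | mine (s : GState) (h : s.active = p) (hg : 0 < s.chips p p)
      (hw : WinsWithS p (SRound s)) : WinsWithS p s
  | theirs (s : GState) (h : s.active ≠ p) (h0 : 0 < totalChips s s.active)
      (hw : ∀ s', Step s s' → WinsWithS p s') : WinsWithS p s

/-- Every pile on the board is an alternating sequence of colors. -/
def Alternating (l : List Pile) : Prop := ∀ π ∈ l, π.Chain' (· ≠ ·)

/-- The long piles (length at least 2) whose top chip has color `c`. -/
def longPiles (c : Color) (l : List Pile) : List Pile :=
  l.filter (fun π => decide (2 ≤ π.length) && (π.head? == some c))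

/-- The sum, over all long `c`-piles, of the number of `c` chips they
contain (e.g. `Σᵢ |ρᵢ|_r` for `c = r`). -/
def longSum (c : Color) (l : List Pile) : ℕ :=
  ((longPiles c l).map (fun π => π.count c)).sum

/-- The maximum, over all long `c`-piles, of the number of `c` chips they
contain (`0` if there is no long `c`-pile). -/
def longMax (c : Color) (l : List Pile) : ℕ :=
  ((longPiles c l).map (fun π => π.count c)).foldr Nat.max 0

/-- The total number of chips in the game (in hands and on the board). -/
def chipCount (s : GState) : ℕ :=
  totalChips s Color.b + totalChips s Color.r + (s.board.map List.length).sum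


/-! Red keeps the generalized type I condition `m_b + Σᵢ |βᵢ|_b ≤ n_r` on alternating boards
invariant at the start of every Blue turn.  A Blue move that keeps the turn does not raise the
left-hand side nor lower `n_r`: capturing a `b`-pile trades its `|β|_b` chips on the board for at
most as many in hand.  A Blue move that hands the turn to Red either spends a blue chip or gives
Red a capture, and Red's guard then covers the longest `b`-pile, in particular the one Blue may
just have created, so the condition holds again after Red's round of `S`.  Every Blue move lowers
the number of chips in the game or in Blue's hand and a round of `S` raises neither, so Blue is
eventually eliminated. -/

namespace Color

lemma other_ne (c : Color) : c.other ≠ c := by cases c <;> simp [other]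

lemma eq_other_of_ne {c d : Color} (h : d ≠ c) : d = c.other := by
  cases c <;> cases d <;> simp_all [other]

end Color

lemma List.sum_map_set_add {α : Type*} (f : α → ℕ) (l : List α) {i : ℕ} (a d : α)
    (h : i < l.length) :
    ((l.set i a).map f).sum + f (l.getD i d) = (l.map f).sum + f a := by
  induction l generalizing i with
  | nil => simp at h
  | cons x t ih =>
    cases i with
    | zero => simp; ring
    | succ n =>
      have := ih (i := n) (by simpa using h)
      simp only [List.set_cons_succ, List.map_cons, List.sum_cons, List.getD_cons_succ] at this ⊢
      omega

lemma List.getD_mem {α : Type*} {l : List α} {i : ℕ} (d : α) (h : i < l.length) :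
    l.getD i d ∈ l :=
  List.getD_eq_getElem _ _ h ▸ List.getElem_mem h

lemma List.getD_mem_or_eq_default {α : Type*} (l : List α) (i : ℕ) (d : α) :
    l.getD i d ∈ l ∨ l.getD i d = d := by
  by_cases h : i < l.length
  · exact .inl (List.getD_mem d h)
  · exact .inr (List.getD_eq_default _ _ (not_lt.1 h))

namespace Pile

lemma count_add_count_other (π : Pile) (c : Color) :
    π.count c + π.count c.other = π.length := by
  induction π with
  | nil => simp
  | cons a t ih => cases a <;> cases c <;> simp [Color.other] at ih ⊢ <;> omega

lemma count_of_alternating {π : Pile} (halt : π.IsChain (· ≠ ·)) {c : Color}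
    (hc : π.head? = some c) : π.count c = (π.length + 1) / 2 := by
  induction π generalizing c with
  | nil => simp at hc
  | cons a t ih =>
    obtain rfl : a = c := by simpa using hc
    have htail := count_add_count_other t a
    rcases t with _ | ⟨d, u⟩
    · simp
    · rw [List.isChain_cons_cons] at halt
      obtain rfl := Color.eq_other_of_ne halt.1.symm
      have := ih halt.2 (c := a.other) rfl
      simp only [List.count_cons_self, List.length_cons] at this htail ⊢
      omega

lemma count_le_count_of_length_le {π σ : Pile} (hπ : π.IsChain (· ≠ ·))
    (hσ : σ.IsChain (· ≠ ·)) {c : Color} (hπc : π.head? = some c) (hσc : σ.head? = some c)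
    (hlen : π.length ≤ σ.length) : π.count c ≤ σ.count c := by
  rw [count_of_alternating hπ hπc, count_of_alternating hσ hσc]
  omega

lemma eq_singleton_of_head?_of_length_le_one {π : Pile} {c : Color} (hc : π.head? = some c)
    (hlen : π.length ≤ 1) : π = [c] := by
  rcases π with _ | ⟨a, _ | ⟨a', t⟩⟩ <;> simp_all

end Pile

def longCount (c : Color) (π : Pile) : ℕ :=
  if 2 ≤ π.length ∧ π.head? = some c then π.count c else 0

lemma longCount_eq_zero_of_head?_ne {c : Color} {π : Pile} (h : π.head? ≠ some c) :
    longCount c π = 0 := by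
  simp [longCount, h]

lemma longSum_eq_sum_longCount (c : Color) (l : List Pile) :
    longSum c l = (l.map (longCount c)).sum := by
  induction l with
  | nil => rfl
  | cons π t ih =>
    by_cases h : 2 ≤ π.length ∧ π.head? = some c <;> simp_all [longSum, longPiles, longCount]

lemma longSum_set_add (c : Color) (l : List Pile) {i : ℕ} (σ : Pile) (hi : i < l.length) :
    longSum c (l.set i σ) + longCount c (l.getD i []) = longSum c l + longCount c σ := by
  simp only [longSum_eq_sum_longCount]
  exact List.sum_map_set_add _ _ _ _ hi

lemma alternating_set {l : List Pile} (halt : Alternating l) {i : ℕ} {σ : Pile}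
    (hσ : σ.IsChain (· ≠ ·)) : Alternating (l.set i σ) := fun π hπ =>
  (List.mem_or_eq_of_mem_set hπ).elim (halt π) (· ▸ hσ)

lemma isChain_cons_of_head?_ne {π : Pile} (hπ : π.IsChain (· ≠ ·)) {c : Color}
    (hc : π.head? ≠ some c) : (c :: π).IsChain (· ≠ ·) := by
  rcases π with _ | ⟨a, t⟩
  · exact List.isChain_singleton c
  · exact List.isChain_cons_cons.2 ⟨fun h => hc (by simp [h]), hπ⟩

lemma targetIdx_spec (q : Color) {l : List Pile} {π : Pile} (hπ : π ∈ l)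
    (hq : π.head? = some q) :
    targetIdx q l < l.length ∧ (l.getD (targetIdx q l) []).head? = some q ∧
      π.length ≤ (l.getD (targetIdx q l) []).length := by
  set opp := l.filter (fun π => π.head? == some q)
  have hπopp : π ∈ opp := List.mem_filter.2 ⟨hπ, by simpa using hq⟩
  have hne : opp ≠ [] := List.ne_nil_of_mem hπopp
  set M := (opp.map List.length).foldr Nat.max 0
  have hM : M = (opp.map List.length).foldr max ⊥ := rfl
  have hMmem : M ∈ opp.map List.length := by
    apply List.maximum_mem
    rw [hM, List.foldr_max_of_ne_nil (by simpa using hne)]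
  obtain ⟨σ, hσopp, hσM⟩ := List.mem_map.1 hMmem
  have hσ := List.mem_filter.1 hσopp
  have hex : ∃ τ ∈ l, ((τ.head? == some q) && (τ.length == M)) = true :=
    ⟨σ, hσ.1, by simpa [hσM] using hσ.2⟩
  have hlt := List.findIdx_lt_length_of_exists hex
  have hidx : targetIdx q l = l.findIdx (fun τ => (τ.head? == some q) && (τ.length == M)) := by
    simp [targetIdx, opp, M, List.isEmpty_iff, hne]
  have hfound := List.findIdx_getElem (w := hlt)
  simp only [Bool.and_eq_true, beq_iff_eq] at hfound
  rw [hidx, List.getD_eq_getElem _ _ hlt, hfound.1, hfound.2]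
  exact ⟨hlt, rfl, List.le_max_of_le (List.mem_map_of_mem hπopp) le_rfl⟩

def clearPiles (p : Color) (l : List Pile) : List Pile :=
  l.map fun π => if π.head? == some p then [] else π

def SBoard (p : Color) (l : List Pile) : List Pile :=
  (clearPiles p l).set (targetIdx p.other (clearPiles p l))
    (p :: (clearPiles p l).getD (targetIdx p.other (clearPiles p l)) [])

def captureGain (p : Color) (l : List Pile) : ℕ :=
  ((l.filter fun π => π.head? == some p).map
    fun π => if π.contains p.other then π.count p else π.count p - 1).sum

section SRound

variable (s : GState)

lemma SRound_active : (SRound s).active = s.active.other := rfl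

lemma SRound_board : (SRound s).board = SBoard s.active s.board := rfl

lemma SRound_chips_self_self :
    (SRound s).chips s.active s.active =
      s.chips s.active s.active + captureGain s.active s.board - 1 := by
  simp [SRound, captureGain]

lemma SRound_chips_self_other : (SRound s).chips s.active s.active.other = 0 := by
  simp [SRound, Color.other_ne]

lemma SRound_chips_other (x : Color) :
    (SRound s).chips s.active.other x = s.chips s.active.other x := by
  simp [SRound, Color.other_ne]

end SRound

section SBoard

variable {p : Color} {l : List Pile}

lemma head?_ne_of_mem_clearPiles {π : Pile} (hπ : π ∈ clearPiles p l) :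
    π.head? ≠ some p := by
  obtain ⟨τ, -, rfl⟩ := List.mem_map.1 hπ
  split_ifs with h <;> simp_all

lemma mem_clearPiles {π : Pile} (hπ : π ∈ l) (hp : π.head? ≠ some p) :
    π ∈ clearPiles p l :=
  List.mem_map.2 ⟨π, hπ, by simp [hp]⟩

lemma alternating_clearPiles (halt : Alternating l) : Alternating (clearPiles p l) := by
  intro π hπ
  obtain ⟨τ, hτ, rfl⟩ := List.mem_map.1 hπ
  split_ifs
  · exact List.isChain_nil
  · exact halt τ hτ

lemma longSum_clearPiles {q : Color} (hqp : q ≠ p) :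
    longSum q (clearPiles p l) = longSum q l := by
  simp only [longSum_eq_sum_longCount, clearPiles, List.map_map]
  refine congrArg List.sum (List.map_congr_left fun π _ => ?_)
  by_cases h : π.head? = some p
  · simp [h, longCount, hqp.symm]
  · simp [h]

lemma head?_ne_of_getD_clearPiles (i : ℕ) : ((clearPiles p l).getD i []).head? ≠ some p := by
  rcases List.getD_mem_or_eq_default (clearPiles p l) i [] with h | h
  · exact head?_ne_of_mem_clearPiles h
  · rw [h]; simp

lemma isChain_getD_clearPiles (halt : Alternating l) (i : ℕ) :
    ((clearPiles p l).getD i []).IsChain (· ≠ ·) := by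
  rcases List.getD_mem_or_eq_default (clearPiles p l) i [] with h | h
  · exact alternating_clearPiles halt _ h
  · rw [h]; exact List.isChain_nil

lemma alternating_SBoard (halt : Alternating l) : Alternating (SBoard p l) :=
  alternating_set (alternating_clearPiles halt)
    (isChain_cons_of_head?_ne (isChain_getD_clearPiles halt _) (head?_ne_of_getD_clearPiles _))

lemma longSum_SBoard_add_longCount_target :
    longSum p.other (SBoard p l) +
        longCount p.other ((clearPiles p l).getD (targetIdx p.other (clearPiles p l)) []) =
      longSum p.other l := by
  set t := targetIdx p.other (clearPiles p l)
  rw [← longSum_clearPiles (l := l) (Color.other_ne p)]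
  by_cases ht : t < (clearPiles p l).length
  · rw [SBoard, longSum_set_add _ _ _ ht,
      longCount_eq_zero_of_head?_ne (by simpa using (Color.other_ne p).symm)]
    rfl
  · rw [SBoard, List.set_eq_of_length_le (not_lt.1 ht), List.getD_eq_default _ _ (not_lt.1 ht)]
    simp [longCount]

lemma longCount_le_longCount_target (halt : Alternating l) {π : Pile} (hπ : π ∈ l) :
    longCount p.other π ≤
      longCount p.other ((clearPiles p l).getD (targetIdx p.other (clearPiles p l)) []) := by
  by_cases hπq : 2 ≤ π.length ∧ π.head? = some p.other
  · have hπp : π.head? ≠ some p := by rw [hπq.2]; simpa using Color.other_ne p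
    obtain ⟨-, htq, hlen⟩ := targetIdx_spec p.other (mem_clearPiles hπ hπp) hπq.2
    rw [longCount, if_pos hπq, longCount, if_pos ⟨hπq.1.trans hlen, htq⟩]
    exact Pile.count_le_count_of_length_le (halt π hπ) (isChain_getD_clearPiles halt _)
      hπq.2 htq hlen
  · simp [longCount, hπq]

/-- The guard of an `S`-round covers a longest pile of the opponent. -/
lemma longSum_SBoard_add_le (halt : Alternating l) {π : Pile} (hπ : π ∈ l) :
    longSum p.other (SBoard p l) + longCount p.other π ≤ longSum p.other l :=
  longSum_SBoard_add_longCount_target (p := p) (l := l) ▸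
    Nat.add_le_add_left (longCount_le_longCount_target halt hπ) _

end SBoard

lemma captureGain_add_sum_length_clearPiles_le (p : Color) (l : List Pile) :
    captureGain p l + ((clearPiles p l).map List.length).sum ≤ (l.map List.length).sum := by
  induction l with
  | nil => simp [captureGain, clearPiles]
  | cons π t ih =>
    have hcount : π.count p ≤ π.length := List.count_le_length
    have hgain : (if π.contains p.other then π.count p else π.count p - 1) ≤ π.length := by
      split <;> omega
    simp only [captureGain, clearPiles, List.filter_cons, List.map_cons, List.sum_cons] at ih ⊢
    split_ifs <;> simp_all <;> omega

lemma sum_length_SBoard_le (p : Color) (l : List Pile) :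
    ((SBoard p l).map List.length).sum ≤ ((clearPiles p l).map List.length).sum + 1 := by
  by_cases ht : targetIdx p.other (clearPiles p l) < (clearPiles p l).length
  · have := List.sum_map_set_add List.length _
      (p :: (clearPiles p l).getD (targetIdx p.other (clearPiles p l)) []) [] ht
    rw [SBoard]
    simp only [List.length_cons] at this
    omega
  · rw [SBoard, List.set_eq_of_length_le (not_lt.1 ht)]
    omega

lemma chipCount_eq_totalChips_add (s : GState) (p : Color) :
    chipCount s = totalChips s p + totalChips s p.other + (s.board.map List.length).sum := by
  cases p <;> simp [chipCount, Color.other]; ring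

lemma totalChips_SRound_other (s : GState) :
    totalChips (SRound s) s.active.other = totalChips s s.active.other := by
  simp [totalChips, SRound_chips_other]

lemma totalChips_eq_chips_add (s : GState) (p : Color) :
    totalChips s p = s.chips p p + s.chips p p.other := by
  cases p <;> simp [totalChips, Color.other, add_comm]

lemma chipCount_SRound_le (s : GState) (hg : 0 < s.chips s.active s.active) :
    chipCount (SRound s) ≤ chipCount s := by
  have hself : totalChips (SRound s) s.active =
      s.chips s.active s.active + captureGain s.active s.board - 1 := by
    rw [totalChips_eq_chips_add, SRound_chips_self_self, SRound_chips_self_other, add_zero]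
  have hgain := captureGain_add_sum_length_clearPiles_le s.active s.board
  have hguard := sum_length_SBoard_le s.active s.board
  have hprisoners := totalChips_eq_chips_add s s.active
  rw [chipCount_eq_totalChips_add _ s.active, chipCount_eq_totalChips_add s s.active, hself,
    totalChips_SRound_other, SRound_board]
  omega

lemma longSum_SBoard_le (p : Color) (l : List Pile) :
    longSum p.other (SBoard p l) ≤ longSum p.other l :=
  longSum_SBoard_add_longCount_target (p := p) (l := l) ▸ Nat.le_add_right _ _

lemma count_cons_sub_le_longCount_add_one {c d : Color} {π : Pile} (hc : π.head? = some c)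
    (hd : d ∈ c :: π) : (c :: π).count c - (if d = c then 1 else 0) ≤ longCount c π + 1 := by
  by_cases hlong : 2 ≤ π.length
  · simp [longCount, hlong, hc]
  · obtain rfl := Pile.eq_singleton_of_head?_of_length_le_one hc (by omega)
    obtain rfl : d = c := by simpa using hd
    simp

/-- The generalized type I Red-winning condition `m_b + Σᵢ |βᵢ|_b ≤ n_r`. -/
def RedWinningCondition (s : GState) : Prop :=
  Alternating s.board ∧
    s.chips Color.b Color.b + longSum Color.b s.board ≤ s.chips Color.r Color.r

lemma redWinningCondition_SRound {s : GState} (hact : s.active = Color.r)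
    (halt : Alternating s.board)
    (h : s.chips Color.b Color.b + longSum Color.b (SBoard Color.r s.board) <
      s.chips Color.r Color.r) :
    RedWinningCondition (SRound s) := by
  have hr := SRound_chips_self_self s
  have hb := SRound_chips_other s Color.b
  rw [hact] at hr hb
  change (SRound s).chips Color.b Color.b = s.chips Color.b Color.b at hb
  refine ⟨SRound_board s ▸ hact ▸ alternating_SBoard halt, ?_⟩
  rw [SRound_board, hact, hr, hb]
  omega

lemma longSum_set_le {c : Color} {σ : Pile} (hσ : σ.head? ≠ some c) (l : List Pile) (i : ℕ) :
    longSum c (l.set i σ) ≤ longSum c l := by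
  by_cases hi : i < l.length
  · have := longSum_set_add c l σ hi
    rw [longCount_eq_zero_of_head?_ne hσ] at this
    omega
  · rw [List.set_eq_of_length_le (not_lt.1 hi)]

/-- The pile the opponent has just extended is covered by `p`'s next guard. -/
lemma longSum_SBoard_set_cons_le {p : Color} {l : List Pile} (halt : Alternating l) {i : ℕ}
    (hi : i < l.length) (hcap : (l.getD i []).head? ≠ some p.other) :
    longSum p.other (SBoard p (l.set i (p.other :: l.getD i []))) ≤ longSum p.other l := by
  have halt' := alternating_set (i := i) halt
    (isChain_cons_of_head?_ne (halt _ (List.getD_mem _ hi)) hcap)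
  have hguard := longSum_SBoard_add_le (p := p) halt' (List.mem_set hi (p.other :: l.getD i []))
  have hset := longSum_set_add p.other l (p.other :: l.getD i []) hi
  omega

lemma PlaceOn.redWinningCondition {i : ℕ} {s s' : GState} (hact : s.active = Color.b)
    (hs : RedWinningCondition s) (hst : PlaceOn i s s') :
    s'.active = Color.b ∧ RedWinningCondition s' ∨
      s'.active = Color.r ∧ 0 < s'.chips Color.r Color.r ∧ RedWinningCondition (SRound s') := by
  obtain ⟨halt, hineq⟩ := hs
  cases hst with
  | noCapture c hi hc hcap =>
    have halt' := alternating_set (i := i) halt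
      (isChain_cons_of_head?_ne (halt _ (List.getD_mem _ hi)) hcap)
    rw [hact] at hc
    cases c with
    | b =>
      have hguard :
          longSum Color.b (SBoard Color.r (s.board.set i (Color.b :: s.board.getD i []))) ≤
            longSum Color.b s.board :=
        longSum_SBoard_set_cons_le (p := Color.r) halt hi hcap
      refine .inr ⟨rfl, ?_, redWinningCondition_SRound rfl halt' ?_⟩ <;>
        simp [hact, -List.getD_eq_getElem?_getD] <;> omega
    | r =>
      have hlong := longSum_set_le (c := Color.b) (by simp) s.board i
        (σ := Color.r :: s.board.getD i [])
      refine .inl ⟨rfl, halt', ?_⟩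
      simp [hact, -List.getD_eq_getElem?_getD]
      omega
  | capture c d hi hc hcap hd =>
    have halt' := alternating_set (i := i) (σ := []) halt List.isChain_nil
    rw [hact] at hc
    cases c with
    | b =>
      have hset := longSum_set_add Color.b s.board [] hi
      have hnil : longCount Color.b [] = 0 := rfl
      have hgain := count_cons_sub_le_longCount_add_one hcap hd
      simp only [List.count_cons_self] at hgain
      refine .inl ⟨rfl, halt', ?_⟩
      simp [hact, -List.getD_eq_getElem?_getD]
      omega
    | r =>
      have hguard :
          longSum Color.b (SBoard Color.r (s.board.set i [])) ≤ longSum Color.b s.board :=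
        (longSum_SBoard_le Color.r _).trans (longSum_set_le (c := Color.b) (by simp) s.board i)
      have hcount : 0 < (s.board.getD i []).count Color.r :=
        List.count_pos_iff.2 (List.mem_of_mem_head? hcap)
      have hd' : (if d = Color.r then 1 else 0) ≤ 1 := by split <;> omega
      refine .inr ⟨rfl, ?_, redWinningCondition_SRound rfl halt' ?_⟩ <;>
        simp [hact, -List.getD_eq_getElem?_getD] <;> omega

lemma Step.redWinningCondition {s s' : GState} (hact : s.active = Color.b)
    (hs : RedWinningCondition s) (hst : Step s s') :
    s'.active = Color.b ∧ RedWinningCondition s' ∨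
      s'.active = Color.r ∧ 0 < s'.chips Color.r Color.r ∧ RedWinningCondition (SRound s') := by
  obtain ⟨halt, hineq⟩ := hs
  rcases hst with ⟨i, _, _, hp⟩ | _ | _
  · exact hp.redWinningCondition hact ⟨halt, hineq⟩
  all_goals
    refine .inl ⟨hact, halt, ?_⟩
    simp [hact, Color.other]
    omega

lemma Step.chipCount_lt_or {s s' : GState} (hst : Step s s') :
    chipCount s' < chipCount s ∨
      chipCount s' = chipCount s ∧ totalChips s' s.active < totalChips s s.active := by
  obtain ⟨board, chips, active⟩ := s
  cases hst with
  | place i _ _ hp =>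
    cases hp with
    | noCapture c hi hc hcap =>
      have hlen := List.sum_map_set_add List.length board (c :: board.getD i []) [] hi
      right
      cases active <;> cases c <;> simp [chipCount, totalChips] at hc hlen ⊢ <;> omega
    | capture c d hi hc hcap hd =>
      have hlen := List.sum_map_set_add List.length board [] [] hi
      have hcount := Pile.count_add_count_other (c :: board.getD i []) c
      have hdc : 0 < (c :: board.getD i []).count d := List.count_pos_iff.2 hd
      left
      cases active <;> cases c <;> cases d <;>
        simp [chipCount, totalChips, Color.other, -List.count_pos_iff] at hc hlen hcount hdc ⊢ <;>
        omega
  | discardPrisoner _ hc =>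
    left
    cases active <;> simp [chipCount, totalChips, Color.other] at hc ⊢ <;> omega
  | donatePrisoner _ hc =>
    right
    cases active <;> simp [chipCount, totalChips, Color.other] at hc ⊢ <;> omega

lemma WinsWithS.of_forall_step {p : Color} {s : GState} (h : s.active ≠ p)
    (hw : ∀ s', Step s s' → WinsWithS p s') : WinsWithS p s := by
  rcases Nat.eq_zero_or_pos (totalChips s s.active) with h0 | h0
  · exact .elim s h h0
  · exact .theirs s h h0 hw

theorem winsWithS_red_of_step {s s' : GState} (hact : s.active = Color.b)
    (hs : RedWinningCondition s) (hst : Step s s') : WinsWithS Color.r s' := by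
  have hlt := hst.chipCount_lt_or
  rcases hst.redWinningCondition hact hs with ⟨hact', hs'⟩ | ⟨hact', hguard, hs'⟩
  · exact .of_forall_step (by simp [hact']) fun _ h => winsWithS_red_of_step hact' hs' h
  · have hact'' : (SRound s').active = Color.b := by rw [SRound_active, hact']; rfl
    have hcount := chipCount_SRound_le s' (hact' ▸ hguard)
    have hblue : totalChips (SRound s') Color.b = totalChips s' Color.b := by
      simpa only [hact', Color.other] using totalChips_SRound_other s'
    exact .mine s' hact' hguard <|
      .of_forall_step (by simp [hact'']) fun _ h => winsWithS_red_of_step hact'' hs' h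
termination_by (chipCount s, totalChips s Color.b)
decreasing_by
  all_goals
    rw [Prod.lex_def]
    rw [hact] at hlt
    omega

theorem typeII_red_wins_play_on_beta_general (s : GState)
    (halt : Alternating s.board)
    (hactive : s.active = Color.b)
    (h : s.chips Color.b Color.b + longSum Color.b s.board
        ≤ s.chips Color.r Color.r) :
    ∀ (i : ℕ) (s' : GState),
      2 ≤ (s.board.getD i []).length →
      (s.board.getD i []).head? = some Color.b →
      PlaceOn i s s' →
      WinsWithS Color.r s' :=
  fun i s' _ _ hp => winsWithS_red_of_step hactive ⟨halt, h⟩ (.place i s s' hp)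

/-- **Type II, Red wins when Blue plays on `β`.**  Let the board be of
type II (all piles alternating, exactly one long `r`-pile and exactly one
long `b`-pile `β`) and let Blue be the active player.  If `m_b ≥ 0` and
`m_b + |β|_b ≤ n_r` when Blue's turn starts, and Blue places a chip (blue or
red) on the long `b`-pile `β` during their current round, then Red wins by
applying strategy `S` at every one of Red's rounds. -/
theorem typeII_red_wins_play_on_beta (s : GState)
    (halt : Alternating s.board)
    (hroom : chipCount s ≤ s.board.length)
    (hactive : s.active = Color.b)
    (hII₁ : (longPiles Color.r s.board).length = 1)
    (hII₂ : (longPiles Color.b s.board).length = 1)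
    (h : s.chips Color.b Color.b + longSum Color.b s.board
        ≤ s.chips Color.r Color.r) :
    ∀ (i : ℕ) (s' : GState),
      2 ≤ (s.board.getD i []).length →
      (s.board.getD i []).head? = some Color.b →
      PlaceOn i s s' →
      WinsWithS Color.r s' :=
  typeII_red_wins_play_on_beta_general s halt hactive h
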